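/- arXiv:2203.07226 — 9 statements merged into one kernel-verified Lean document; each statement's English description precedes it below -/
import Mathlib

section
/- Let (a_n) be a strictly increasing sequence of positive integers such that a_{n+1}/a_n tends to infinity. Then for any positive integers m, n and any integer r, there are only finitely many tuples (i_1,...,i_m, j_1,...,j_n) of indices such that a_{i_1}+...+a_{i_m} = a_{j_1}+...+a_{j_n} + r and max_k a_{i_k} ≠ max_l a_{j_l}. -/
open Finset

lemma stmt0_aux (a : ℕ → ℕ) (hpos : ∀ n, 0 < a n) (hmono : StrictMono a)
    (C N : ℕ) (hN : ∀ k ≥ N, C * a k < a (k + 1))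
    (m n : ℕ) (r : ℤ) (hC : (n : ℤ) + |r| < C)
    (f : Fin m → ℕ) (g : Fin n → ℕ)
    (heq : (∑ k, (a (f k) : ℤ)) = (∑ l, (a (g l) : ℤ)) + r)
    (M : Fin m) (hlt : ∀ l, a (g l) < a (f M)) :
    f M ≤ N := by
  by_contra hgt
  push_neg at hgt
  obtain ⟨M0, hMeq⟩ : ∃ M0, f M = M0 + 1 := by
    refine ⟨f M - 1, ?_⟩
    omega
  rw [hMeq] at hlt
  have hM0 : M0 ≥ N := by omega
  have key := hN M0 hM0
  -- each g l ≤ M0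
  have hg : ∀ l, a (g l) ≤ a M0 := by
    intro l
    have : g l < M0 + 1 := hmono.lt_iff_lt.mp (hlt l)
    exact hmono.monotone (by omega)
  -- bound sum right
  have h1 : (∑ l, (a (g l) : ℤ)) ≤ n * a M0 := by
    calc (∑ l, (a (g l) : ℤ)) ≤ ∑ _l : Fin n, (a M0 : ℤ) := by
          apply Finset.sum_le_sum
          intro l _
          exact_mod_cast hg l
      _ = n * a M0 := by simp [mul_comm]
  have h2 : (a (M0 + 1) : ℤ) ≤ ∑ k, (a (f k) : ℤ) := by
    have := Finset.single_le_sum (f := fun k => (a (f k) : ℤ)) (fun k _ => by positivity)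
      (Finset.mem_univ M)
    rwa [hMeq] at this
  have h3 : (r : ℤ) ≤ |r| * a M0 := by
    have h4 : (1 : ℤ) ≤ a M0 := by exact_mod_cast hpos M0
    calc r ≤ |r| := le_abs_self r
      _ = |r| * 1 := by ring
      _ ≤ |r| * a M0 := by
          apply mul_le_mul_of_nonneg_left h4 (abs_nonneg r)
  have key' : (C : ℤ) * a M0 < a (M0 + 1) := by exact_mod_cast key
  have hCa : ((n : ℤ) + |r|) * a M0 < C * a M0 := by
    apply mul_lt_mul_of_pos_right hC
    exact_mod_cast hpos M0
  nlinarith [h1, h2, h3, key', hCa]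

/-- If `(a_n)` is a strictly increasing sequence of positive integers with
`a_{n+1}/a_n → ∞`, then for any `m, n > 0` and `r : ℤ` there are only finitely many
tuples `(i₁,…,i_m, j₁,…,j_n)` with `a_{i₁}+⋯+a_{i_m} = a_{j₁}+⋯+a_{j_n} + r` and
`max_k a_{i_k} ≠ max_l a_{j_l}`. -/
theorem stmt0 (a : ℕ → ℕ) (hpos : ∀ n, 0 < a n) (hmono : StrictMono a)
    (hratio : ∀ C : ℕ, ∃ N, ∀ n ≥ N, C * a n < a (n + 1))
    (m n : ℕ) (hm : 0 < m) (hn : 0 < n) (r : ℤ) :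
    {p : (Fin m → ℕ) × (Fin n → ℕ) |
      (∑ k, (a (p.1 k) : ℤ)) = (∑ l, (a (p.2 l) : ℤ)) + r ∧
      Finset.univ.sup (fun k => a (p.1 k)) ≠ Finset.univ.sup (fun l => a (p.2 l))}.Finite := by
  obtain ⟨N, hN⟩ := hratio (m + n + r.natAbs + 1)
  apply Set.Finite.subset (Set.Finite.prod
    (Set.Finite.pi (fun _ : Fin m => Set.finite_Iic N))
    (Set.Finite.pi (fun _ : Fin n => Set.finite_Iic N)))
  rintro ⟨f, g⟩ ⟨heq, hne⟩
  haveI : Nonempty (Fin m) := Fin.pos_iff_nonempty.mp hm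
  haveI : Nonempty (Fin n) := Fin.pos_iff_nonempty.mp hn
  obtain ⟨k0, -, hk0⟩ := Finset.exists_mem_eq_sup (Finset.univ : Finset (Fin m))
    Finset.univ_nonempty (fun k => a (f k))
  obtain ⟨l0, -, hl0⟩ := Finset.exists_mem_eq_sup (Finset.univ : Finset (Fin n))
    Finset.univ_nonempty (fun l => a (g l))
  simp only [Set.mem_prod, Set.mem_pi, Set.mem_univ, Set.mem_Iic, forall_true_left]
  have habs : (|r| : ℤ) = r.natAbs := (Int.abs_eq_natAbs r)
  rcases lt_or_gt_of_ne hne with h | h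
  · -- sup left < sup right : right max dominates
    have hlt : ∀ k, a (f k) < a (g l0) := by
      intro k
      calc a (f k) ≤ Finset.univ.sup (fun k => a (f k)) :=
            Finset.le_sup (f := fun k => a (f k)) (Finset.mem_univ k)
        _ < a (g l0) := hl0 ▸ h
    have heq' : (∑ l, (a (g l) : ℤ)) = (∑ k, (a (f k) : ℤ)) + (-r) := by linarith
    have hgN : g l0 ≤ N := by
      apply stmt0_aux a hpos hmono _ N hN n m (-r) ?_ g f heq' l0 hlt
      rw [abs_neg, habs]
      push_cast
      omega
    constructor
    · intro k
      have : f k < g l0 := hmono.lt_iff_lt.mp (hlt k)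
      omega
    · intro l
      have : a (g l) ≤ a (g l0) := hl0 ▸ Finset.le_sup (f := fun l => a (g l)) (Finset.mem_univ l)
      have : g l ≤ g l0 := hmono.le_iff_le.mp this
      omega
  · -- sup right < sup left
    have hlt : ∀ l, a (g l) < a (f k0) := by
      intro l
      calc a (g l) ≤ Finset.univ.sup (fun l => a (g l)) :=
            Finset.le_sup (f := fun l => a (g l)) (Finset.mem_univ l)
        _ < a (f k0) := hk0 ▸ h
    have hfN : f k0 ≤ N := by
      apply stmt0_aux a hpos hmono _ N hN m n r ?_ f g heq k0 hlt
      rw [habs]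
      push_cast
      omega
    constructor
    · intro k
      have : a (f k) ≤ a (f k0) := hk0 ▸ Finset.le_sup (f := fun k => a (f k)) (Finset.mem_univ k)
      have : f k ≤ f k0 := hmono.le_iff_le.mp this
      omega
    · intro l
      have : g l < f k0 := hmono.lt_iff_lt.mp (hlt l)
      omega
end

section
/- Let (a_n) be a strictly increasing sequence of positive integers with a_{n+1}/a_n → ∞, and let Q = {a_n : n ≥ 0}. Then for every positive integer m and every integer c ≠ 0, the set of (pairwise distinct) tuples (v_1,...,v_n) from Q with c_1 v_1 + ... + c_n v_n = c (where c_1,...,c_n are fixed nonzero integers) is finite, with a bound on the number of solutions independent of c. -/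
/-!
Let `k` be an injective index tuple solving `∑ cᵢ a(kᵢ) = x`, with largest index `t = k j`, and let
`S = ∑ |cᵢ|`. Always `|x| ≤ S a(t)`. Lacunarity gives `N₀` with `2 S a(s) < a(s+1)` for `s ≥ N₀`;
if `t > N₀`, the other terms contribute at most `S a(t-1) < a(t)/2`, so `a(t) < 2|x|`. The window
`a(t) < 2|x| ≤ 2 S a(t)` contains at most one `t > N₀`, so the top index takes at most `N₀ + 2`
values whatever `x` is. Deleting it leaves a solution of an equation in one fewer unknown, and the
uniform bound follows by induction on the number of unknowns.
-/

open Finset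

variable {ι α : Type*}

lemma Set.Finite.encard_biUnion_le_mul {T : Set ι} (hT : T.Finite) {s : ι → Set α} {B : ℕ∞}
    (hs : ∀ t ∈ T, (s t).encard ≤ B) : (⋃ t ∈ T, s t).encard ≤ T.encard * B := by
  lift T to Finset ι using hT
  calc (⋃ t ∈ (T : Set ι), s t).encard ≤ ∑ t ∈ T, (s t).encard := by
        simpa using T.set_encard_biUnion_le s
    _ ≤ T.card • B := Finset.sum_le_card_nsmul _ _ _ hs
    _ = (T : Set ι).encard * B := by simp [nsmul_eq_mul]

lemma abs_sum_mul_le_sum_abs_mul {R : Type*} [CommRing R] [LinearOrder R] [IsOrderedRing R]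
    (s : Finset ι) (c x : ι → R) {M : R} (hx : ∀ i ∈ s, 0 ≤ x i ∧ x i ≤ M) :
    |∑ i ∈ s, c i * x i| ≤ (∑ i ∈ s, |c i|) * M := by
  rw [Finset.sum_mul]
  refine (abs_sum_le_sum_abs _ _).trans (Finset.sum_le_sum fun i hi => ?_)
  rw [abs_mul, abs_of_nonneg (hx i hi).1]
  exact mul_le_mul_of_nonneg_left (hx i hi).2 (abs_nonneg _)

def IsLacunary (a : ℕ → ℕ) : Prop :=
  ∀ C : ℕ, ∃ N, ∀ n ≥ N, C * a n < a (n + 1)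

def indexSolutions [Fintype ι] (a : ℕ → ℕ) (c : ι → ℤ) (x : ℤ) : Set (ι → ℕ) :=
  {k | Function.Injective k ∧ ∑ i, c i * (a (k i) : ℤ) = x}

section TopIndex

variable [Fintype ι] {a : ℕ → ℕ} {c : ι → ℤ} {S : ℤ} {k : ι → ℕ} {j : ι}

lemma abs_sum_le_mul_of_le_top (hmono : Monotone a) (hS : ∑ i, |c i| ≤ S)
    (hj : ∀ i, k i ≤ k j) : |∑ i, c i * (a (k i) : ℤ)| ≤ S * a (k j) :=
  (abs_sum_mul_le_sum_abs_mul _ _ _ fun i _ =>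
    ⟨by positivity, by exact_mod_cast hmono (hj i)⟩).trans
      (mul_le_mul_of_nonneg_right hS (by positivity))

lemma lt_two_mul_abs_sum_of_top (hmono : Monotone a) (hk : Function.Injective k)
    (hj : ∀ i, k i ≤ k j) (hcj : c j ≠ 0) (hS : ∑ i, |c i| ≤ S)
    (hgrowth : 2 * S * a (k j - 1) < a (k j)) :
    (a (k j) : ℤ) < 2 * |∑ i, c i * (a (k i) : ℤ)| := by
  classical
  set rest := ∑ i ∈ univ.erase j, c i * (a (k i) : ℤ)
  have hrest : |rest| ≤ S * a (k j - 1) := by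
    refine (abs_sum_mul_le_sum_abs_mul (M := (a (k j - 1) : ℤ)) _ _ _
      fun i hi => ⟨by positivity, ?_⟩).trans ?_
    · have : k i < k j := (hj i).lt_of_ne (hk.ne (Finset.ne_of_mem_erase hi))
      exact_mod_cast hmono (by omega)
    · refine mul_le_mul_of_nonneg_right ?_ (by positivity)
      exact (Finset.sum_le_sum_of_subset_of_nonneg (erase_subset _ _)
        fun _ _ _ => abs_nonneg _).trans hS
  have htop : (a (k j) : ℤ) ≤ |c j * a (k j)| := by
    rw [abs_mul, Nat.abs_cast]
    exact le_mul_of_one_le_left (Int.natCast_nonneg _) (Int.one_le_abs hcj)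
  have hsplit : |c j * a (k j)| ≤ |∑ i, c i * (a (k i) : ℤ)| + |rest| := by
    rw [eq_sub_of_add_eq (Finset.add_sum_erase univ (fun i => c i * (a (k i) : ℤ)) (mem_univ j))]
    exact abs_sub _ _
  linarith

lemma subsingleton_lacunary_window (hmono : Monotone a) {N₀ : ℕ}
    (hgrowth : ∀ t ≥ N₀, 2 * S * a t < a (t + 1)) (y : ℤ) :
    {t | N₀ < t ∧ (a t : ℤ) < 2 * y ∧ y ≤ S * a t}.Subsingleton := by
  suffices key : ∀ t t', N₀ < t → y ≤ S * a t → (a t' : ℤ) < 2 * y → ¬ t < t' by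
    intro t ht t' ht'
    by_contra hne
    rcases Nat.lt_or_gt_of_ne hne with h | h
    exacts [key t t' ht.1 ht.2.2 ht'.2.1 h, key t' t ht'.1 ht'.2.2 ht.2.1 h]
  intro t t' ht hy hy' hlt
  have h₁ := hgrowth t ht.le
  have h₂ : (a (t + 1) : ℤ) ≤ a t' := by exact_mod_cast hmono hlt
  linarith

lemma exists_encard_le_forall_top_mem (hmono : Monotone a) (ha : IsLacunary a)
    (hc : ∀ i, c i ≠ 0) : ∃ B : ℕ, ∀ x, ∃ T : Set ℕ, T.encard ≤ B ∧
      ∀ k ∈ indexSolutions a c x, ∀ j, (∀ i, k i ≤ k j) → k j ∈ T := by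
  set S : ℕ := ∑ i, (c i).natAbs
  have hS : ∑ i, |c i| = (S : ℤ) := by push_cast [S, Int.natCast_natAbs]; rfl
  obtain ⟨N₀, hN₀⟩ := ha (2 * S)
  have hgrowth : ∀ t ≥ N₀, 2 * (S : ℤ) * a t < a (t + 1) := fun t ht => by
    exact_mod_cast hN₀ t ht
  refine ⟨N₀ + 2, fun x =>
    ⟨Set.Iic N₀ ∪ {t | N₀ < t ∧ (a t : ℤ) < 2 * |x| ∧ |x| ≤ S * a t}, ?_, ?_⟩⟩
  · calc _ ≤ (Set.Iic N₀).encard + _ := Set.encard_union_le _ _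
      _ ≤ (N₀ + 1 : ℕ) + 1 := add_le_add
          (by rw [← Finset.coe_Iic, Set.encard_coe_eq_coe_finsetCard, Nat.card_Iic])
          (Set.encard_le_one_iff_subsingleton.2 (subsingleton_lacunary_window hmono hgrowth _))
      _ = (N₀ + 2 : ℕ) := by push_cast; ring
  · rintro k ⟨hk, rfl⟩ j hj
    by_cases hle : k j ≤ N₀
    · exact Or.inl hle
    · have hgrowth' : 2 * (S : ℤ) * a (k j - 1) < a (k j) := by
        simpa [Nat.sub_add_cancel (by omega : 1 ≤ k j)] using hgrowth (k j - 1) (by omega)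
      exact Or.inr ⟨by omega, lt_two_mul_abs_sum_of_top hmono hk hj (hc j) hS.le hgrowth',
        abs_sum_le_mul_of_le_top hmono hS.le hj⟩

end TopIndex

lemma removeNth_mem_indexSolutions {a : ℕ → ℕ} {n : ℕ} {c : Fin (n + 1) → ℤ} {x : ℤ}
    {k : Fin (n + 1) → ℕ} (hk : k ∈ indexSolutions a c x) (j : Fin (n + 1)) :
    j.removeNth k ∈ indexSolutions a (c ∘ j.succAbove) (x - c j * a (k j)) := by
  obtain ⟨hinj, rfl⟩ := hk
  refine ⟨hinj.comp j.succAbove_right_injective, ?_⟩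
  rw [Fin.sum_univ_succAbove _ j]
  simp [Fin.removeNth]

theorem exists_encard_indexSolutions_le {a : ℕ → ℕ} (hmono : Monotone a)
    (ha : IsLacunary a) : ∀ {n : ℕ} (c : Fin n → ℤ), (∀ i, c i ≠ 0) →
      ∃ N : ℕ, ∀ x, (indexSolutions a c x).encard ≤ N
  | 0, c, _ => ⟨1, fun _ => Set.encard_le_one_iff_subsingleton.2
      fun k _ k' _ => Subsingleton.elim k k'⟩
  | n + 1, c, hc => by
    obtain ⟨B, hB⟩ := exists_encard_le_forall_top_mem hmono ha hc
    choose M hM using fun j : Fin (n + 1) =>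
      exists_encard_indexSolutions_le hmono ha (c ∘ j.succAbove) fun i => hc _
    refine ⟨(n + 1) * (B * univ.sup M), fun x => ?_⟩
    obtain ⟨T, hTcard, hT⟩ := hB x
    have hcover : indexSolutions a c x ⊆ ⋃ j ∈ (Set.univ : Set (Fin (n + 1))), ⋃ t ∈ T,
        Fin.insertNth j t '' indexSolutions a (c ∘ j.succAbove) (x - c j * a t) := by
      intro k hk
      obtain ⟨j, hj⟩ := Finite.exists_max k
      exact Set.mem_biUnion (Set.mem_univ j) <| Set.mem_biUnion (hT k hk j hj)
        ⟨_, removeNth_mem_indexSolutions hk j, Fin.insertNth_self_removeNth j k⟩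
    calc _ ≤ _ := Set.encard_le_encard hcover
      _ ≤ (Set.univ : Set (Fin (n + 1))).encard * (T.encard * univ.sup M) :=
        Set.finite_univ.encard_biUnion_le_mul fun j _ =>
          (Set.finite_of_encard_le_coe hTcard).encard_biUnion_le_mul fun t _ =>
            (Set.encard_image_le _ _).trans ((hM j _).trans
              (by exact_mod_cast Finset.le_sup (mem_univ j)))
      _ ≤ _ := by
        rw [Set.encard_univ, ENat.card_eq_coe_fintype_card, Fintype.card_fin]
        push_cast
        gcongr

lemma subset_image_indexSolutions [Fintype ι] (a : ℕ → ℕ) (c : ι → ℤ) (x : ℤ) :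
    {v : ι → ℕ | (∀ i, v i ∈ Set.range a) ∧ Function.Injective v ∧
      ∑ i, c i * (v i : ℤ) = x} ⊆ (a ∘ ·) '' indexSolutions a c x := by
  rintro v ⟨hv, hinj, rfl⟩
  choose k hk using hv
  obtain rfl : a ∘ k = v := funext hk
  exact ⟨k, ⟨hinj.of_comp, rfl⟩, rfl⟩

theorem stmt2_general (a : ℕ → ℕ) (hmono : StrictMono a)
    (hratio : ∀ C : ℕ, ∃ N, ∀ n ≥ N, C * a n < a (n + 1))
    (n : ℕ) (c : Fin n → ℤ) (hc : ∀ i, c i ≠ 0) :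
    ∀ m : ℕ, 0 < m → ∃ N : ℕ, ∀ cc : ℤ, cc ≠ 0 →
      ({v : Fin n → ℕ | (∀ i, v i ∈ Set.range a) ∧ Function.Injective v ∧
          (∑ i, c i * (v i : ℤ)) = cc}.Finite ∧
        {v : Fin n → ℕ | (∀ i, v i ∈ Set.range a) ∧ Function.Injective v ∧
          (∑ i, c i * (v i : ℤ)) = cc}.ncard ≤ N) := by
  intro _ _
  obtain ⟨N, hN⟩ := exists_encard_indexSolutions_le hmono.monotone hratio c hc
  refine ⟨N, fun cc _ => Set.encard_le_coe_iff_finite_ncard_le.1 ?_⟩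
  exact (Set.encard_le_encard (subset_image_indexSolutions a c cc)).trans
    ((Set.encard_image_le _ _).trans (hN cc))

/-- with `Q = {a_n}`, fixed nonzero coefficients `c₁,…,c_n`, for every positive
integer `m` and every integer `c ≠ 0`, the set of pairwise distinct tuples from `Q` with
`c₁v₁+⋯+c_nv_n = c` is finite, with a bound on the number of solutions independent of `c`. -/
theorem stmt2 (a : ℕ → ℕ) (hpos : ∀ n, 0 < a n) (hmono : StrictMono a)
    (hratio : ∀ C : ℕ, ∃ N, ∀ n ≥ N, C * a n < a (n + 1))
    (n : ℕ) (hn : 0 < n) (c : Fin n → ℤ) (hc : ∀ i, c i ≠ 0) :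
    ∀ m : ℕ, 0 < m → ∃ N : ℕ, ∀ cc : ℤ, cc ≠ 0 →
      ({v : Fin n → ℕ | (∀ i, v i ∈ Set.range a) ∧ Function.Injective v ∧
          (∑ i, c i * (v i : ℤ)) = cc}.Finite ∧
        {v : Fin n → ℕ | (∀ i, v i ∈ Set.range a) ∧ Function.Injective v ∧
          (∑ i, c i * (v i : ℤ)) = cc}.ncard ≤ N) :=
  stmt2_general a hmono hratio n c hc
end

section
/- Let (b_n)_{n≥0} be any sequence of integers. Then there is a sequence (a_n)_{n≥0} of integers such that |a_n - b_n| ≤ n for all n ≥ 0, and for every positive integer m, a_n ≡ 0 (mod m) for all sufficiently large n. -/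
/-- for any sequence `(b_n)` of integers there is a sequence `(a_n)` with
`|a_n - b_n| ≤ n` for all `n`, which is eventually `≡ 0` modulo every positive integer `m`. -/
theorem stmt5 (b : ℕ → ℤ) :
    ∃ a : ℕ → ℤ, (∀ n : ℕ, |a n - b n| ≤ (n : ℤ)) ∧
      ∀ m : ℕ, 0 < m → ∃ N : ℕ, ∀ n ≥ N, (m : ℤ) ∣ a n := by
  set d : ℕ → ℕ := fun n => (Nat.findGreatest (fun k => k.factorial ≤ n + 1) (n + 1)).factorial
    with hd
  have hdpos : ∀ n, 0 < d n := fun n => Nat.factorial_pos _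
  have hdle : ∀ n, d n ≤ n + 1 := fun n =>
    Nat.findGreatest_spec (P := fun k => k.factorial ≤ n + 1) (Nat.zero_le _) (by simp)
  refine ⟨fun n => (d n : ℤ) * (b n / (d n : ℤ)), ?_, ?_⟩
  · intro n
    have h1 : (0:ℤ) < (d n : ℤ) := by exact_mod_cast hdpos n
    have h2 : (d n : ℤ) * (b n / (d n : ℤ)) - b n = -(b n % (d n : ℤ)) := by
      rw [Int.emod_def]; ring
    rw [h2, abs_neg, abs_of_nonneg (Int.emod_nonneg _ h1.ne')]
    have h3 : b n % (d n : ℤ) < (d n : ℤ) := Int.emod_lt_of_pos _ h1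
    have h4 : (d n : ℤ) ≤ (n : ℤ) + 1 := by exact_mod_cast hdle n
    omega
  · intro m hm
    refine ⟨m.factorial, fun n hn => ?_⟩
    have hle : m ≤ Nat.findGreatest (fun k => k.factorial ≤ n + 1) (n + 1) := by
      apply Nat.le_findGreatest
      · exact le_trans (Nat.self_le_factorial m) (by omega)
      · exact by omega
    have : m ∣ d n := Nat.dvd_factorial hm hle
    exact Dvd.dvd.trans (by exact_mod_cast this) (Dvd.intro _ rfl)
end

section
/- Fix n ≥ 1 and let Q = {k! : k ≥ n}. Then the map (x_1,...,x_n) ↦ x_1 + ... + x_n from Q^n to ℕ, restricted to nondecreasing tuples, is injective; equivalently, any two multisets of size n of factorials k! with k ≥ n having the same sum are equal. -/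
open Nat

/-- If all elements of `s` are at most `a = j!` with `card s ≤ j`, and `b = k! > a`
is an element of `t`, then `s.sum < t.sum`. -/
lemma stmt10_aux_lt (n m : ℕ) (hm : m + 1 ≤ n) (s t : Multiset ℕ)
    (hs : Multiset.card s = m + 1)
    (a : ℕ) (ha : ∀ x ∈ s, x ≤ a) (j : ℕ) (hj : n ≤ j) (haj : a = j !)
    (b : ℕ) (hb : b ∈ t) (k : ℕ) (hbk : b = k !) (hab : a < b) :
    s.sum < t.sum := by
  have hjk : j < k := by
    by_contra h
    push_neg at h
    have h2 := Nat.factorial_le h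
    rw [haj, hbk] at hab
    omega
  have h1 : s.sum ≤ (m + 1) * a := by
    have := Multiset.sum_le_card_nsmul s a ha
    simpa [hs, smul_eq_mul] using this
  have h2 : (m + 1) * a ≤ j * j ! := by
    rw [haj]
    exact Nat.mul_le_mul_right _ (by omega)
  have h3 : j * j ! < (j + 1) ! := by
    rw [Nat.factorial_succ]
    have : 0 < j ! := Nat.factorial_pos j
    nlinarith
  have h4 : (j + 1)! ≤ b := by
    rw [hbk]; exact Nat.factorial_le hjk
  have h5 : b ≤ t.sum := Multiset.single_le_sum (fun x _ => Nat.zero_le x) b hb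
  omega

lemma stmt10_aux (n : ℕ) (hn : 1 ≤ n) : ∀ m, m ≤ n → ∀ s t : Multiset ℕ,
    Multiset.card s = m → Multiset.card t = m →
    (∀ x ∈ s, ∃ k, n ≤ k ∧ x = k !) → (∀ x ∈ t, ∃ k, n ≤ k ∧ x = k !) →
    s.sum = t.sum → s = t := by
  intro m
  induction m with
  | zero =>
    intro _ s t hs ht _ _ _
    rw [Multiset.card_eq_zero] at hs ht
    rw [hs, ht]
  | succ m ih =>
    intro hm s t hs ht hsQ htQ hsum
    have hsne : s ≠ 0 := by
      intro h; rw [h] at hs; simp at hs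
    have htne : t ≠ 0 := by
      intro h; rw [h] at ht; simp at ht
    -- maxima
    have hsF : s.toFinset.Nonempty := by
      rwa [Multiset.toFinset_nonempty]
    have htF : t.toFinset.Nonempty := by
      rwa [Multiset.toFinset_nonempty]
    set a := s.toFinset.max' hsF with hadef
    set b := t.toFinset.max' htF with hbdef
    have has : a ∈ s := Multiset.mem_toFinset.mp (s.toFinset.max'_mem hsF)
    have hbt : b ∈ t := Multiset.mem_toFinset.mp (t.toFinset.max'_mem htF)
    have hamax : ∀ x ∈ s, x ≤ a := fun x hx =>
      s.toFinset.le_max' x (Multiset.mem_toFinset.mpr hx)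
    have hbmax : ∀ x ∈ t, x ≤ b := fun x hx =>
      t.toFinset.le_max' x (Multiset.mem_toFinset.mpr hx)
    obtain ⟨j, hj, haj⟩ := hsQ a has
    obtain ⟨k, hk, hbk⟩ := htQ b hbt
    have hab : a = b := by
      rcases lt_trichotomy a b with h | h | h
      · exact absurd hsum (Nat.ne_of_lt
          (stmt10_aux_lt n m hm s t hs a hamax j hj haj b hbt k hbk h))
      · exact h
      · exact absurd hsum.symm (Nat.ne_of_lt
          (stmt10_aux_lt n m hm t s ht b hbmax k hk hbk a has j haj h))
    obtain ⟨s', hs'⟩ := Multiset.exists_cons_of_mem has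
    obtain ⟨t', ht'⟩ := Multiset.exists_cons_of_mem hbt
    have hcards' : Multiset.card s' = m := by
      have := hs; rw [hs', Multiset.card_cons] at this; omega
    have hcardt' : Multiset.card t' = m := by
      have := ht; rw [ht', Multiset.card_cons] at this; omega
    have hsums' : s'.sum = t'.sum := by
      rw [hs', ht', Multiset.sum_cons, Multiset.sum_cons, hab] at hsum
      omega
    have hst' : s' = t' := by
      refine ih (by omega) s' t' hcards' hcardt' ?_ ?_ hsums'
      · intro x hx
        exact hsQ x (by rw [hs']; exact Multiset.mem_cons_of_mem hx)
      · intro x hx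
        exact htQ x (by rw [ht']; exact Multiset.mem_cons_of_mem hx)
    rw [hs', ht', hab, hst']

/-- for `n ≥ 1` and `Q = {k! : k ≥ n}`, any two multisets of size `n` of
elements of `Q` with the same sum are equal. -/
theorem stmt10 (n : ℕ) (hn : 1 ≤ n) (s t : Multiset ℕ)
    (hs : Multiset.card s = n) (ht : Multiset.card t = n)
    (hsQ : ∀ x ∈ s, ∃ k, n ≤ k ∧ x = k !)
    (htQ : ∀ x ∈ t, ∃ k, n ≤ k ∧ x = k !)
    (hsum : s.sum = t.sum) : s = t :=
  stmt10_aux n hn n le_rfl s t hs ht hsQ htQ hsum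
end

section
/- Let (a_n)_{n≥0} be a vaporous sequence of positive integers and Q = {a_n : n ≥ 0}. For the formula x ∈ Q ∧ (∃ distinct y, z ∈ Q with x = y + z): only finitely many elements of Q are the sum of two distinct elements of Q. -/
/-- for a vaporous sequence `(a_n)` with `Q = {a_n}`, only finitely many
elements of `Q` are the sum of two distinct elements of `Q`. -/
theorem stmt11 (a : ℕ → ℕ) (hpos : ∀ n, 0 < a n) (hmono : StrictMono a)
    (hratio : ∀ C : ℕ, ∃ N, ∀ n ≥ N, C * a n < a (n + 1))
    (hmod : ∀ m : ℕ, 0 < m → ∃ N, ∀ n₁ n₂, N ≤ n₁ → N ≤ n₂ → a n₁ % m = a n₂ % m) :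
    {x ∈ Set.range a | ∃ y ∈ Set.range a, ∃ z ∈ Set.range a, y ≠ z ∧ x = y + z}.Finite := by
  obtain ⟨N, hN⟩ := hratio 3
  apply Set.Finite.subset (Set.finite_Iio (2 * a N))
  have key : ∀ i j k : ℕ, a i < a j → a k = a i + a j → a k < 2 * a N := by
    intro i j k hij hsum
    have hip := hpos i
    have hjk : j < k := hmono.lt_iff_lt.mp (show a j < a k by omega)
    have hjN : j < N := by
      by_contra h
      have h1 := hN j (by omega)
      have h2 : a (j + 1) ≤ a k := hmono.monotone (by omega)
      have := hpos j
      omega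
    have := hmono hjN
    omega
  rintro x ⟨⟨k, hk⟩, y, ⟨i, hi⟩, z, ⟨j, hj⟩, hne, hsum⟩
  subst hi hj hk
  simp only [Set.mem_Iio]
  rcases lt_or_gt_of_ne hne with h | h
  · exact key i j k h hsum
  · exact key j i k h (by omega)
end

section
/- Let (a_n)_{n≥0} be a vaporous sequence of positive integers and Q = {a_n : n ≥ 0}. Then only finitely many pairs (x, y) with x, y ∈ Q satisfy x + y ∈ Q, and only finitely many pairs (x, y) of elements of Q with x ≠ y satisfy x + y = u + v for some pair {u, v} ⊆ Q with {u,v} ≠ {x,y}. -/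
/-- for a vaporous sequence `(a_n)` with `Q = {a_n}`: only finitely many pairs
`(x,y) ∈ Q × Q` satisfy `x + y ∈ Q`, and only finitely many pairs of distinct elements of `Q`
have `x + y = u + v` for some pair `{u,v} ⊆ Q` with `{u,v} ≠ {x,y}`. -/
theorem stmt12 (a : ℕ → ℕ) (hpos : ∀ n, 0 < a n) (hmono : StrictMono a)
    (hratio : ∀ C : ℕ, ∃ N, ∀ n ≥ N, C * a n < a (n + 1))
    (hmod : ∀ m : ℕ, 0 < m → ∃ N, ∀ n₁ n₂, N ≤ n₁ → N ≤ n₂ → a n₁ % m = a n₂ % m) :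
    {p : ℕ × ℕ | p.1 ∈ Set.range a ∧ p.2 ∈ Set.range a ∧ p.1 + p.2 ∈ Set.range a}.Finite ∧
    {p : ℕ × ℕ | p.1 ∈ Set.range a ∧ p.2 ∈ Set.range a ∧ p.1 ≠ p.2 ∧
      ∃ u ∈ Set.range a, ∃ v ∈ Set.range a, p.1 + p.2 = u + v ∧
        ({u, v} : Set ℕ) ≠ {p.1, p.2}}.Finite := by
  obtain ⟨N, hN⟩ := hratio 2
  have key1 : ∀ i j k, a i ≤ a j → a i + a j = a k → a j ≤ a N := by
    intro i j k hle hsum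
    by_contra h
    push_neg at h
    have hjN : N ≤ j := le_of_lt (hmono.lt_iff_lt.mp h)
    have hi := hpos i
    have hjk : a j < a k := by omega
    have hk1 : j + 1 ≤ k := hmono.lt_iff_lt.mp hjk
    have h2 : a (j + 1) ≤ a k := hmono.monotone hk1
    have h3 : 2 * a j < a (j + 1) := hN j hjN
    omega
  have key2 : ∀ i j k l, i < j → k ≤ l → a i + a j = a k + a l →
      ¬(k = i ∧ l = j) → j ≤ N := by
    intro i j k l hij hkl hsum hne
    by_contra h
    push_neg at h
    have hij' : a i < a j := hmono hij
    have hkl' : a k ≤ a l := hmono.monotone hkl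
    have hjN : N ≤ j := le_of_lt h
    have h1 : 2 * a j < a (j + 1) := hN j hjN
    by_cases hl : N ≤ l
    · have h2 : 2 * a l < a (l + 1) := hN l hl
      have hlj : l ≤ j := by
        have hx : a l < a (j + 1) := by omega
        have := hmono.lt_iff_lt.mp hx; omega
      have hjl : j ≤ l := by
        have hx : a j < a (l + 1) := by omega
        have := hmono.lt_iff_lt.mp hx; omega
      have hlj' : l = j := le_antisymm hlj hjl
      subst hlj'
      have hk : a k = a i := by omega
      exact hne ⟨hmono.injective hk, rfl⟩
    · push_neg at hl
      have hlN : a l < a N := hmono hl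
      have h2 : 2 * a N < a (N + 1) := hN N le_rfl
      have hx : a j < a (N + 1) := by omega
      have := hmono.lt_iff_lt.mp hx
      omega
  constructor
  · apply Set.Finite.subset ((Set.finite_Iic (a N)).prod (Set.finite_Iic (a N)))
    rintro ⟨x, y⟩ ⟨⟨i, rfl⟩, ⟨j, rfl⟩, ⟨k, hk⟩⟩
    rcases le_total (a i) (a j) with hle | hle
    · have hj := key1 i j k hle hk.symm
      exact ⟨le_trans hle hj, hj⟩
    · have hi := key1 j i k hle (by simp at hk; omega)
      exact ⟨hi, le_trans hle hi⟩
  · apply Set.Finite.subset ((Set.finite_Iic (a N)).prod (Set.finite_Iic (a N)))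
    rintro ⟨x, y⟩ ⟨⟨i, rfl⟩, ⟨j, rfl⟩, hxy, u, ⟨k, rfl⟩, v, ⟨l, rfl⟩, hsum, hne⟩
    have hij : i ≠ j := fun h => hxy (by rw [h])
    rcases hij.lt_or_gt with hij' | hij' <;> rcases le_total k l with hkl | hkl
    · have hj := key2 i j k l hij' hkl hsum (by rintro ⟨rfl, rfl⟩; exact hne rfl)
      have hj' : a j ≤ a N := hmono.monotone hj
      exact ⟨le_trans (hmono hij').le hj', hj'⟩
    · have hj := key2 i j l k hij' hkl (by omega)
        (by rintro ⟨rfl, rfl⟩; exact hne (Set.pair_comm _ _))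
      have hj' : a j ≤ a N := hmono.monotone hj
      exact ⟨le_trans (hmono hij').le hj', hj'⟩
    · have hi := key2 j i k l hij' hkl (by omega)
        (by rintro ⟨rfl, rfl⟩; exact hne (Set.pair_comm _ _))
      have hi' : a i ≤ a N := hmono.monotone hi
      exact ⟨hi', le_trans (hmono hij').le hi'⟩
    · have hi := key2 j i l k hij' hkl (by omega) (by rintro ⟨rfl, rfl⟩; exact hne rfl)
      have hi' : a i ≤ a N := hmono.monotone hi
      exact ⟨hi', le_trans (hmono hij').le hi'⟩
end

section
/- Let Q ⊆ ℤ⁺ be enumerated by a strictly increasing sequence (a_n) with a_{n+1}/a_n → ∞, let E be any graph relation on Q, and set A = Q ∪ {a + b : (a,b) ∈ E}. Then Q is definable in (ℤ, +, A): the set of elements of A that are not a sum of two distinct elements of A differs from Q by a finite set, and hence Q itself is a Boolean combination of A, the set {x ∈ A : ∃ distinct y,z ∈ A, x = y+z}, and a finite set. -/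
/-- with `Q = {a_n}` (ratio of consecutive terms tending to infinity), `E` a
graph relation on `Q`, and `A = Q ∪ {u+v : E u v}`, the set of elements of `A` that are not
a sum of two distinct elements of `A` differs from `Q` by a finite set. -/
theorem stmt13 (a : ℕ → ℕ) (hpos : ∀ n, 0 < a n) (hmono : StrictMono a)
    (hratio : ∀ C : ℕ, ∃ N, ∀ n ≥ N, C * a n < a (n + 1))
    (E : ℕ → ℕ → Prop)
    (hEQ : ∀ x y, E x y → x ∈ Set.range a ∧ y ∈ Set.range a)
    (hsymm : ∀ x y, E x y → E y x) (hirr : ∀ x, ¬ E x x) :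
    ∀ A S : Set ℕ,
      A = Set.range a ∪ {x | ∃ u v, E u v ∧ x = u + v} →
      S = {x ∈ A | ∃ y ∈ A, ∃ z ∈ A, y ≠ z ∧ x = y + z} →
      (symmDiff (A \ S) (Set.range a)).Finite := by
  intro A S hA hS
  obtain ⟨N, hN⟩ := hratio 4
  have hQA : Set.range a ⊆ A := by rw [hA]; exact Set.subset_union_left
  have hApos : ∀ x ∈ A, 0 < x := by
    intro x hx; rw [hA] at hx
    rcases hx with ⟨m, rfl⟩ | ⟨u, v, huv, rfl⟩
    · exact hpos m
    · obtain ⟨⟨i, rfl⟩, -⟩ := hEQ _ _ huv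
      have := hpos i; omega
  have key : ∀ n, N + 1 ≤ n → a n ∉ S := by
    intro n hn hmem
    rw [hS] at hmem
    obtain ⟨-, y, hy, z, hz, hne, heq⟩ := hmem
    have h4 : 4 * a (n - 1) < a n := by
      have := hN (n - 1) (by omega)
      rwa [show n - 1 + 1 = n by omega] at this
    have hsmall : ∀ x ∈ A, x < a n → 2 * x < a n := by
      intro x hx hlt
      rw [hA] at hx
      rcases hx with ⟨m, rfl⟩ | ⟨u, v, huv, rfl⟩
      · have hm : m < n := hmono.lt_iff_lt.mp hlt
        have : a m ≤ a (n - 1) := hmono.monotone (by omega)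
        omega
      · obtain ⟨⟨i, rfl⟩, ⟨j, rfl⟩⟩ := hEQ _ _ huv
        have hi : a i < a n := by have := hpos j; omega
        have hj : a j < a n := by have := hpos i; omega
        have h1 : a i ≤ a (n - 1) :=
          hmono.monotone (by have := hmono.lt_iff_lt.mp hi; omega)
        have h2 : a j ≤ a (n - 1) :=
          hmono.monotone (by have := hmono.lt_iff_lt.mp hj; omega)
        omega
    have hyp := hApos y hy
    have hzp := hApos z hz
    have h1 : 2 * y < a n := hsmall y hy (by omega)
    have h2 : 2 * z < a n := hsmall z hz (by omega)
    omega
  have hsub : symmDiff (A \ S) (Set.range a) ⊆ a '' Set.Iic N := by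
    intro x hx
    rw [Set.mem_symmDiff] at hx
    rcases hx with ⟨⟨hxA, hxS⟩, hxQ⟩ | ⟨⟨n, rfl⟩, hx2⟩
    · exfalso
      rw [hA] at hxA
      rcases hxA with h | ⟨u, v, huv, rfl⟩
      · exact hxQ h
      · apply hxS
        rw [hS]
        obtain ⟨hu, hv⟩ := hEQ _ _ huv
        refine ⟨by rw [hA]; exact Set.mem_union_right _ ⟨u, v, huv, rfl⟩,
          u, hQA hu, v, hQA hv, ?_, rfl⟩
        rintro rfl; exact hirr u huv
    · have hnS : a n ∈ S := by
        by_contra h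
        exact hx2 ⟨hQA ⟨n, rfl⟩, h⟩
      have hle : n ≤ N := by by_contra h; exact key n (by omega) hnS
      exact ⟨n, hle, rfl⟩
  exact ((Set.finite_Iic N).image a).subset hsub
end

section
/- Let Q ⊆ ℤ⁺ be enumerated by a strictly increasing sequence with a_{n+1}/a_n → ∞, let E be a graph relation on Q, and set A = Q ∪ {a+b : (a,b) ∈ E}. Then the relation E is definable from (ℤ, +, A, Q) up to a finite error: the set {(x,y) ∈ Q × Q : x + y ∈ A} differs from E by only finitely many pairs. -/
/-- with `Q = {a_n}`, `E` a graph relation on `Q`, and `A = Q ∪ {u+v : E u v}`,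
the set `{(x,y) ∈ Q × Q : x + y ∈ A}` differs from `E` by only finitely many pairs. -/
theorem stmt14 (a : ℕ → ℕ) (hpos : ∀ n, 0 < a n) (hmono : StrictMono a)
    (hratio : ∀ C : ℕ, ∃ N, ∀ n ≥ N, C * a n < a (n + 1))
    (E : ℕ → ℕ → Prop)
    (hEQ : ∀ x y, E x y → x ∈ Set.range a ∧ y ∈ Set.range a)
    (hsymm : ∀ x y, E x y → E y x) (hirr : ∀ x, ¬ E x x) :
    ∀ A : Set ℕ,
      A = Set.range a ∪ {x | ∃ u v, E u v ∧ x = u + v} →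
      (symmDiff {p : ℕ × ℕ | p.1 ∈ Set.range a ∧ p.2 ∈ Set.range a ∧ p.1 + p.2 ∈ A}
        {p : ℕ × ℕ | E p.1 p.2}).Finite := by
  intro A hA
  obtain ⟨N, hN⟩ := hratio 2
  -- key lemma: for m ≤ n with n large, a m + a n ∈ A forces E (a m) (a n)
  have key : ∀ m n, m ≤ n → N + 1 ≤ n → a m + a n ∈ A → E (a m) (a n) := by
    intro m n hmn hNn hmem
    have hmn' : a m ≤ a n := hmono.monotone hmn
    have hpm : 0 < a m := hpos m
    have h2n : 2 * a n < a (n + 1) := hN n (by omega)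
    -- uniqueness of representation
    have main : ∀ p q, p < q → E (a p) (a q) → a p + a q = a m + a n → E (a m) (a n) := by
      intro p q hpq hE' hs
      have hpq' : a p ≤ a q := hmono.monotone hpq.le
      have hpp : 0 < a p := hpos p
      have hq_le : q ≤ n := by
        have h1 : a q < a (n + 1) := by omega
        have := hmono.lt_iff_lt.mp h1
        omega
      have hq_ge : n ≤ q := by
        by_contra hlt
        push_neg at hlt
        have h2 := hN (n - 1) (by omega)
        have hnn : n - 1 + 1 = n := by omega
        rw [hnn] at h2
        have haq : a q ≤ a (n - 1) := hmono.monotone (by omega)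
        omega
      have hqn : q = n := le_antisymm hq_le hq_ge
      subst hqn
      have hpm' : a p = a m := by omega
      have : p = m := hmono.injective hpm'
      subst this
      exact hE'
    rw [hA] at hmem
    rcases hmem with ⟨k, hk⟩ | ⟨u, v, huv, heq⟩
    · -- sum is in Q: impossible
      exfalso
      have hkn : a n < a k := by omega
      have : n < k := hmono.lt_iff_lt.mp hkn
      have : a (n + 1) ≤ a k := hmono.monotone (by omega)
      omega
    · obtain ⟨⟨p, hp⟩, ⟨q, hq⟩⟩ := hEQ u v huv
      subst hp; subst hq
      rcases lt_trichotomy p q with h | h | h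
      · exact main p q h huv (by omega)
      · exact absurd huv (h ▸ hirr (a p))
      · exact main q p h (hsymm _ _ huv) (by omega)
  -- the symmetric difference is contained in a finite product
  apply Set.Finite.subset
    (Set.Finite.prod (Set.Finite.image a (Set.finite_Iic (N + 1)))
      (Set.Finite.image a (Set.finite_Iic (N + 1))))
  rintro ⟨x, y⟩ hp
  rcases Set.mem_symmDiff.mp hp with ⟨hS, hE⟩ | ⟨hE, hS⟩
  swap
  · exact absurd ⟨(hEQ x y hE).1, (hEQ x y hE).2, by
      rw [hA]; exact Or.inr ⟨x, y, hE, rfl⟩⟩ hS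
  obtain ⟨⟨i, hi⟩, ⟨j, hj⟩, hsum⟩ := hS
  by_contra hcon
  have hij : ¬ (i ≤ N + 1 ∧ j ≤ N + 1) := by
    rintro ⟨h1, h2⟩
    exact hcon ⟨⟨i, h1, hi⟩, ⟨j, h2, hj⟩⟩
  have hExy : ¬ E x y := hE
  rcases le_total i j with h | h
  · have hkey := key i j h (by omega) (by rw [hi, hj]; exact hsum)
    rw [hi, hj] at hkey
    exact hExy hkey
  · have hkey := key j i h (by omega) (by rw [hi, hj, Nat.add_comm]; exact hsum)
    rw [hi, hj] at hkey
    exact hExy (hsymm _ _ hkey)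
end

section
/- Let (a_n) be a strictly increasing sequence of positive integers with a_{n+1}/a_n → ∞, and fix nonzero integers c_0, c_1, ..., c_n. Suppose c_0 v_0 + c_1 v_1 + ... + c_n v_n = c_0 v_0' + c_1 v_1' + ... + c_n v_n' where all v_i and all v_i' are pairwise distinct elements of Q = {a_n}, each tuple individually. Then the difference of the two sums, rearranged as an integer combination of distinct elements of Q equal to 0, has all sufficiently large elements of Q appearing with coefficient 0; in particular, if all the v_i, v_i' are larger than a suitable threshold depending only on the c_i, then {(v_i, c_i)} and {(v_i', c_i)} determine the same formal sum. -/
open Finset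

/-- for `Q = {a_n}` with ratios tending to infinity and fixed nonzero integers
`c₀,…,c_n`, there is a threshold `K` (depending only on the data) such that whenever two
tuples of pairwise distinct elements of `Q`, all larger than `K`, satisfy
`∑ cᵢ vᵢ = ∑ cᵢ vᵢ'`, the two formal sums coincide: every `q` receives the same total
coefficient from `(vᵢ, cᵢ)` as from `(vᵢ', cᵢ)`. -/
theorem stmt16 (a : ℕ → ℕ) (hpos : ∀ n, 0 < a n) (hmono : StrictMono a)
    (hratio : ∀ C : ℕ, ∃ N, ∀ n ≥ N, C * a n < a (n + 1))
    (n : ℕ) (c : Fin (n + 1) → ℤ) (hc : ∀ i, c i ≠ 0) :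
    ∃ K : ℕ, ∀ v v' : Fin (n + 1) → ℕ,
      (∀ i, v i ∈ Set.range a) → (∀ i, v' i ∈ Set.range a) →
      Function.Injective v → Function.Injective v' →
      (∀ i, K < v i) → (∀ i, K < v' i) →
      (∑ i, c i * (v i : ℤ)) = (∑ i, c i * (v' i : ℤ)) →
      ∀ q : ℕ, (∑ i, if v i = q then c i else 0) = (∑ i, if v' i = q then c i else 0) := by
  classical
  set C : ℕ := 2 * ∑ i, (c i).natAbs with hCdef
  obtain ⟨N, hN⟩ := hratio C
  refine ⟨a N, fun v v' hv hv' hinj hinj' hK hK' hsum => ?_⟩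
  set d : ℕ → ℤ := fun q =>
    (∑ i, if v i = q then c i else 0) - (∑ i, if v' i = q then c i else 0) with hddef
  suffices h : ∀ q, d q = 0 by
    intro q
    have := h q
    simp only [hddef] at this
    linarith
  set S : Finset ℕ := (Finset.image v Finset.univ) ∪ (Finset.image v' Finset.univ) with hSdef
  have hvS : ∀ i, v i ∈ S := fun i =>
    Finset.mem_union_left _ (Finset.mem_image_of_mem v (Finset.mem_univ i))
  have hv'S : ∀ i, v' i ∈ S := fun i =>
    Finset.mem_union_right _ (Finset.mem_image_of_mem v' (Finset.mem_univ i))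
  have hSrange : ∀ q ∈ S, q ∈ Set.range a ∧ a N < q := by
    intro q hq
    rcases Finset.mem_union.mp hq with h | h
    · obtain ⟨i, _, rfl⟩ := Finset.mem_image.mp h
      exact ⟨hv i, hK i⟩
    · obtain ⟨i, _, rfl⟩ := Finset.mem_image.mp h
      exact ⟨hv' i, hK' i⟩
  have hout : ∀ q, q ∉ S → d q = 0 := by
    intro q hq
    simp only [hddef]
    rw [Finset.sum_eq_zero, Finset.sum_eq_zero, sub_zero]
    · intro i _
      rw [if_neg (fun h => hq (by rw [← h]; exact hv'S i))]
    · intro i _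
      rw [if_neg (fun h => hq (by rw [← h]; exact hvS i))]
  have key : ∀ (w : Fin (n+1) → ℕ), (∀ i, w i ∈ S) →
      ∑ q ∈ S, (∑ i, if w i = q then c i else 0) * (q:ℤ) = ∑ i, c i * (w i : ℤ) := by
    intro w hw
    have step : ∀ q ∈ S, (∑ i, if w i = q then c i else 0) * (q:ℤ)
        = ∑ i, if w i = q then c i * q else 0 := by
      intro q _
      rw [Finset.sum_mul]
      exact Finset.sum_congr rfl fun i _ => by split <;> simp
    rw [Finset.sum_congr rfl step, Finset.sum_comm]
    refine Finset.sum_congr rfl fun i _ => ?_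
    rw [Finset.sum_eq_single_of_mem (w i) (hw i)]
    · simp
    · intro q _ hne
      rw [if_neg (Ne.symm hne)]
  have hzero : ∑ q ∈ S, d q * q = 0 := by
    simp only [hddef, sub_mul]
    rw [Finset.sum_sub_distrib, key v hvS, key v' hv'S, hsum, sub_self]
  have keyabs : ∀ (w : Fin (n+1) → ℕ), (∀ i, w i ∈ S) →
      ∑ q ∈ S, |∑ i, if w i = q then c i else 0| ≤ ∑ i, |c i| := by
    intro w hw
    calc ∑ q ∈ S, |∑ i, if w i = q then c i else 0|
        ≤ ∑ q ∈ S, ∑ i, |if w i = q then c i else 0| :=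
          Finset.sum_le_sum fun q _ => Finset.abs_sum_le_sum_abs _ _
      _ = ∑ i, ∑ q ∈ S, |if w i = q then c i else 0| := Finset.sum_comm
      _ ≤ ∑ i, |c i| := by
          refine Finset.sum_le_sum fun i _ => ?_
          rw [Finset.sum_eq_single_of_mem (w i) (hw i)]
          · simp
          · intro q _ hne
            rw [if_neg (Ne.symm hne), abs_zero]
  have habs : ∑ q ∈ S, |d q| ≤ (C : ℤ) := by
    have h1 := keyabs v hvS
    have h2 := keyabs v' hv'S
    have h3 : ∑ q ∈ S, |d q| ≤
        ∑ q ∈ S, (|∑ i, if v i = q then c i else 0| + |∑ i, if v' i = q then c i else 0|) := by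
      refine Finset.sum_le_sum fun q _ => ?_
      exact abs_sub (_ : ℤ) _
    rw [Finset.sum_add_distrib] at h3
    have hc2 : (C : ℤ) = 2 * ∑ i, |c i| := by
      rw [hCdef]
      push_cast [Int.natCast_natAbs]
      ring
    rw [hc2]
    linarith
  -- contradiction argument
  by_contra hcon
  push_neg at hcon
  obtain ⟨q1, hq1⟩ := hcon
  set T : Finset ℕ := S.filter (fun q => d q ≠ 0) with hTdef
  have hq1S : q1 ∈ S := by
    by_contra h
    exact hq1 (hout q1 h)
  have hTne : T.Nonempty := ⟨q1, Finset.mem_filter.mpr ⟨hq1S, hq1⟩⟩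
  set q0 := T.max' hTne with hq0def
  have hq0T : q0 ∈ T := T.max'_mem hTne
  have hq0S : q0 ∈ S := (Finset.mem_filter.mp hq0T).1
  have hq0ne : d q0 ≠ 0 := (Finset.mem_filter.mp hq0T).2
  obtain ⟨⟨m, hm⟩, hgt⟩ := hSrange q0 hq0S
  have hmN : N < m := hmono.lt_iff_lt.mp (by rw [hm]; exact hgt)
  obtain ⟨m', rfl⟩ : ∃ m', m = (N + m') + 1 :=
    ⟨m - N - 1, by omega⟩
  -- every element of T.erase q0 is at most a (N + m')
  have hsmall : ∀ q ∈ T.erase q0, (q : ℤ) ≤ (a (N + m') : ℤ) := by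
    intro q hq
    have hqne : q ≠ q0 := (Finset.mem_erase.mp hq).1
    have hqT : q ∈ T := (Finset.mem_erase.mp hq).2
    have hqlt : q < q0 := lt_of_le_of_ne (T.le_max' q hqT) hqne
    obtain ⟨⟨j, hj⟩, _⟩ := hSrange q ((Finset.mem_filter.mp hqT).1)
    have hjm : j < N + m' + 1 := hmono.lt_iff_lt.mp (by rw [hj, hm]; exact hqlt)
    have : a j ≤ a (N + m') := hmono.monotone (by omega)
    rw [← hj]
    exact_mod_cast this
  -- split the zero sum
  have hsumT : ∑ q ∈ T, d q * q = 0 := by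
    rw [← hzero]
    exact Finset.sum_filter_of_ne fun q _ h => left_ne_zero_of_mul h
  have hsplit : d q0 * (q0 : ℤ) = - ∑ q ∈ T.erase q0, d q * q := by
    have h0 : d q0 * (q0 : ℤ) + ∑ q ∈ T.erase q0, d q * q = 0 := by
      rw [← hsumT]
      exact Finset.add_sum_erase T (fun q => d q * (q : ℤ)) hq0T
    linarith
  have h1 : (q0 : ℤ) ≤ |d q0 * (q0 : ℤ)| := by
    rw [abs_mul]
    have h1a : (1:ℤ) ≤ |d q0| := Int.one_le_abs hq0ne
    have h1b : |(q0:ℤ)| = (q0:ℤ) := abs_of_nonneg (by positivity)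
    nlinarith [Int.natCast_nonneg q0]
  have h2 : |∑ q ∈ T.erase q0, d q * q| ≤ (C : ℤ) * (a (N + m') : ℤ) := by
    calc |∑ q ∈ T.erase q0, d q * q|
        ≤ ∑ q ∈ T.erase q0, |d q * (q:ℤ)| := Finset.abs_sum_le_sum_abs _ _
      _ ≤ ∑ q ∈ T.erase q0, |d q| * (a (N + m') : ℤ) := by
          refine Finset.sum_le_sum fun q hq => ?_
          rw [abs_mul, abs_of_nonneg (show (0:ℤ) ≤ (q:ℤ) by positivity)]
          exact mul_le_mul_of_nonneg_left (hsmall q hq) (abs_nonneg _)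
      _ = (∑ q ∈ T.erase q0, |d q|) * (a (N + m') : ℤ) := (Finset.sum_mul _ _ _).symm
      _ ≤ (C : ℤ) * (a (N + m') : ℤ) := by
          refine mul_le_mul_of_nonneg_right ?_ (by positivity)
          refine le_trans ?_ habs
          refine Finset.sum_le_sum_of_subset_of_nonneg ?_ (fun q _ _ => abs_nonneg _)
          exact (Finset.erase_subset _ _).trans (Finset.filter_subset _ _)
  have hbig : (C : ℤ) * (a (N + m') : ℤ) < (q0 : ℤ) := by
    have := hN (N + m') (by omega)
    rw [← hm]
    exact_mod_cast this
  rw [hsplit, abs_neg] at h1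
  linarith
end
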